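/- arXiv:1010.5869 — 2 statements merged into one kernel-verified Lean document; each statement's English description precedes it below -/
import Mathlib

section
/- Fix κ ∈ (0,1) and α ≥ 0. Let φ : ℝ → [0,α] be a C² nondecreasing function vanishing on ℝ⁻ and equal to α on [1,∞). For ε > 0 define v_ε(s) = ln s + φ(ε ln ln s) ln ln s on [e,∞). Then as ε → 0, the quantity (2v_ε'(s) + s v_ε''(s)) / (s² v_ε'(s)³) converges to 1 uniformly in s ∈ [e,∞). -/
/-!
Pass to the variable `τ = ln s`: with `χ x = x * φ x` one has `v_ε s = V (ln s)` for
`V τ = τ + χ (ε ln τ) / ε`, and the ratio becomes `(V' + V'') / V' ^ 3` with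
`V' τ = 1 + χ' (ε ln τ) / τ` and `V'' τ = (ε χ'' (ε ln τ) - χ' (ε ln τ)) / τ ^ 2`.
Both `χ'` and `χ''` are continuous and constant outside `[0, 1]`, hence bounded, and `χ' 0 = 0`.
So `χ' (ε ln τ) / τ → 0` uniformly in `τ ≥ 1`: below a threshold `T` the argument `ε ln τ` is
small, above it the denominator is large. Hence `V' → 1` and `V'' → 0` uniformly, and the ratio
tends to `1`.
-/

open Real Filter Topology Set

theorem deriv_ratio_comp_log {V V' : ℝ → ℝ} {V'' s : ℝ} (hs : 0 < s)
    (hV : ∀ᶠ τ in 𝓝 (log s), HasDerivAt V (V' τ) τ) (hV' : HasDerivAt V' V'' (log s)) :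
    (2 * deriv (fun t => V (log t)) s + s * deriv (deriv (fun t => V (log t))) s)
        / (s ^ 2 * deriv (fun t => V (log t)) s ^ 3)
      = (V' (log s) + V'') / V' (log s) ^ 3 := by
  have hd : ∀ᶠ t in 𝓝 s, HasDerivAt (fun t => V (log t)) (V' (log t) / t) t := by
    filter_upwards [(continuousAt_log hs.ne').eventually hV, lt_mem_nhds hs] with t hVt ht
    rw [div_eq_mul_inv]
    exact hVt.comp t (hasDerivAt_log ht.ne')
  have hd' : HasDerivAt (fun t => V' (log t) / t) ((V'' * s⁻¹ * s - V' (log s) * 1) / s ^ 2) s :=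
    (hV'.comp s (hasDerivAt_log hs.ne')).div (hasDerivAt_id s) hs.ne'
  have hdd : deriv (fun t => V (log t)) =ᶠ[𝓝 s] fun t => V' (log t) / t :=
    hd.mono fun t ht => ht.deriv
  rw [hd.self_of_nhds.deriv, hdd.deriv_eq, hd'.deriv]
  field_simp
  ring

theorem hasDerivAt_comp_mul_log {f : ℝ → ℝ} {ε τ : ℝ} (hτ : τ ≠ 0)
    (hf : DifferentiableAt ℝ f (ε * log τ)) :
    HasDerivAt (fun τ => f (ε * log τ)) (deriv f (ε * log τ) * ε / τ) τ := by
  rw [mul_div_assoc, div_eq_mul_inv]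
  exact hf.hasDerivAt.comp τ ((hasDerivAt_log hτ).const_mul ε)

theorem tendsto_comp_mul_log_div {f : ℝ → ℝ} (hf : ContinuousAt f 0) (hf0 : f 0 = 0) {B : ℝ}
    (hB : ∀ x, |f x| ≤ B) :
    Tendsto (fun q : ℝ × ℝ => f (q.1 * log q.2) / q.2) (𝓝 0 ×ˢ 𝓟 (Ici 1)) (𝓝 0) := by
  rw [Metric.tendsto_nhds]
  intro θ hθ
  obtain ⟨r, hr, hfr⟩ := Metric.continuousAt_iff.mp hf θ hθ
  set T := max 1 (B / θ)
  have hlogT : 0 ≤ log T := log_nonneg (le_max_left _ _)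
  rw [eventually_prod_principal_iff, Metric.eventually_nhds_iff]
  refine ⟨r / (log T + 1), by positivity, fun ε hε τ (hτ : 1 ≤ τ) => ?_⟩
  have hτ0 : 0 < τ := one_pos.trans_le hτ
  rw [dist_zero_right, norm_div, Real.norm_eq_abs, Real.norm_eq_abs, abs_of_pos hτ0,
    div_lt_iff₀ hτ0]
  rcases le_or_gt τ T with hτT | hTτ
  · have hlog : |ε * log τ| < r := by
      rw [Real.dist_eq, sub_zero] at hε
      rw [abs_mul, abs_of_nonneg (log_nonneg hτ)]
      calc |ε| * log τ ≤ |ε| * (log T + 1) := by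
            gcongr; linarith [log_le_log hτ0 hτT]
        _ < r := by rwa [lt_div_iff₀ (by positivity)] at hε
    have := hfr (show dist (ε * log τ) 0 < r by rwa [Real.dist_eq, sub_zero])
    rw [Real.dist_eq, hf0, sub_zero] at this
    nlinarith
  · have : B / θ < τ := (le_max_right _ _).trans_lt hTτ
    rw [div_lt_iff₀ hθ] at this
    linarith [hB (ε * log τ)]

namespace LogLogPerturbation

/-- `V χ ε` is `v_ε ∘ exp`, written through `χ x = x * φ x`. -/
noncomputable def V (χ : ℝ → ℝ) (ε τ : ℝ) : ℝ := τ + χ (ε * log τ) / ε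

noncomputable def dV (χ : ℝ → ℝ) (ε τ : ℝ) : ℝ := 1 + deriv χ (ε * log τ) / τ

noncomputable def d2V (χ : ℝ → ℝ) (ε τ : ℝ) : ℝ :=
  (ε * deriv (deriv χ) (ε * log τ) - deriv χ (ε * log τ)) / τ ^ 2

variable {χ : ℝ → ℝ}

theorem hasDerivAt_V (hχ : Differentiable ℝ χ) {ε τ : ℝ} (hε : ε ≠ 0) (hτ : τ ≠ 0) :
    HasDerivAt (V χ ε) (dV χ ε τ) τ := by
  refine ((hasDerivAt_id' τ).add
    ((hasDerivAt_comp_mul_log (ε := ε) hτ (hχ _)).div_const ε)).congr_deriv ?_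
  rw [dV]
  field_simp

theorem hasDerivAt_dV (hχ' : Differentiable ℝ (deriv χ)) {ε τ : ℝ} (hτ : τ ≠ 0) :
    HasDerivAt (dV χ ε) (d2V χ ε τ) τ := by
  refine (((hasDerivAt_comp_mul_log (ε := ε) hτ (hχ' _)).div (hasDerivAt_id' τ) hτ).const_add
    1).congr_deriv ?_
  rw [d2V]
  field_simp

variable {B₁ B₂ : ℝ}

theorem tendsto_dV (hc : ContinuousAt (deriv χ) 0) (h0 : deriv χ 0 = 0)
    (hB₁ : ∀ x, |deriv χ x| ≤ B₁) :
    Tendsto (fun q : ℝ × ℝ => dV χ q.1 q.2) (𝓝 0 ×ˢ 𝓟 (Ici 1)) (𝓝 1) := by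
  simpa [dV] using (tendsto_comp_mul_log_div hc h0 hB₁).const_add 1

theorem tendsto_d2V (hc : ContinuousAt (deriv χ) 0) (h0 : deriv χ 0 = 0)
    (hB₁ : ∀ x, |deriv χ x| ≤ B₁) (hB₂ : ∀ x, |deriv (deriv χ) x| ≤ B₂) :
    Tendsto (fun q : ℝ × ℝ => d2V χ q.1 q.2) (𝓝 0 ×ˢ 𝓟 (Ici 1)) (𝓝 0) := by
  have habs : Tendsto (fun q : ℝ × ℝ => |q.1| * B₂) (𝓝 0 ×ˢ 𝓟 (Ici 1)) (𝓝 0) := by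
    simpa using ((continuous_abs.tendsto 0).comp tendsto_fst).mul_const B₂
  refine squeeze_zero_norm' ?_
    (habs.add (tendsto_comp_mul_log_div hc h0 hB₁).abs |>.trans (by simp))
  rw [eventually_prod_principal_iff]
  refine Eventually.of_forall fun ε τ (hτ : 1 ≤ τ) => ?_
  show |d2V χ ε τ| ≤ |ε| * B₂ + |deriv χ (ε * log τ) / τ|
  set u := ε * log τ
  have hτ0 : 0 < τ := one_pos.trans_le hτ
  have hτ2 : τ ≤ τ ^ 2 := by nlinarith
  have hτ20 : 0 < τ ^ 2 := pow_pos hτ0 2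
  have h₁ : |ε * deriv (deriv χ) u / τ ^ 2| ≤ |ε| * B₂ := by
    rw [abs_div, abs_mul, abs_of_pos hτ20, div_le_iff₀ hτ20]
    have hεB : 0 ≤ |ε| * B₂ := mul_nonneg (abs_nonneg ε) ((abs_nonneg _).trans (hB₂ u))
    nlinarith [mul_le_mul_of_nonneg_left (hB₂ u) (abs_nonneg ε)]
  have h₂ : |deriv χ u / τ ^ 2| ≤ |deriv χ u / τ| := by
    rw [abs_div, abs_div, abs_of_pos hτ0, abs_of_pos hτ20]
    exact div_le_div_of_nonneg_left (abs_nonneg _) hτ0 hτ2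
  calc |d2V χ ε τ| = |ε * deriv (deriv χ) u / τ ^ 2 - deriv χ u / τ ^ 2| := by rw [d2V, sub_div]
    _ ≤ |ε * deriv (deriv χ) u / τ ^ 2| + |deriv χ u / τ ^ 2| := abs_sub _ _
    _ ≤ |ε| * B₂ + |deriv χ u / τ| := add_le_add h₁ h₂

theorem tendsto_ratio (hc : ContinuousAt (deriv χ) 0) (h0 : deriv χ 0 = 0)
    (hB₁ : ∀ x, |deriv χ x| ≤ B₁) (hB₂ : ∀ x, |deriv (deriv χ) x| ≤ B₂) :
    Tendsto (fun q : ℝ × ℝ => (dV χ q.1 q.2 + d2V χ q.1 q.2) / dV χ q.1 q.2 ^ 3)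
      (𝓝 0 ×ˢ 𝓟 (Ici 1)) (𝓝 1) := by
  have h₁ := tendsto_dV hc h0 hB₁
  have h := (h₁.add (tendsto_d2V hc h0 hB₁ hB₂)).div (h₁.pow 3) (by norm_num)
  rwa [add_zero, one_pow, div_one] at h

end LogLogPerturbation

open LogLogPerturbation

theorem Continuous.exists_abs_le_of_eqOn_Iio_Ioi {f : ℝ → ℝ} (hf : Continuous f) {a b c d : ℝ}
    (ha : EqOn f (fun _ => c) (Iio a)) (hb : EqOn f (fun _ => d) (Ioi b)) :
    ∃ B, ∀ x, |f x| ≤ B := by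
  obtain ⟨K, hK⟩ := (isCompact_Icc (a := a) (b := b)).exists_bound_of_continuousOn hf.continuousOn
  refine ⟨max K (max |c| |d|), fun x => ?_⟩
  rcases lt_or_ge x a with hxa | hxa
  · rw [ha hxa]
    exact le_max_of_le_right (le_max_left _ _)
  rcases le_or_gt x b with hxb | hxb
  · exact (hK x ⟨hxa, hxb⟩).trans (le_max_left _ _)
  · rw [hb hxb]
    exact le_max_of_le_right (le_max_right _ _)

section IdMul

variable {φ : ℝ → ℝ} {α : ℝ}

theorem eqOn_deriv_id_mul_Iio (hφ0 : ∀ x ≤ (0 : ℝ), φ x = 0) :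
    EqOn (deriv fun x => x * φ x) (fun _ => 0) (Iio 0) := by
  have h : EqOn (fun x => x * φ x) (fun _ => 0) (Iio 0) := fun x hx => by
    simp [hφ0 x (le_of_lt hx)]
  simpa using h.deriv isOpen_Iio

theorem eqOn_deriv_id_mul_Ioi (hφ1 : ∀ x ≥ (1 : ℝ), φ x = α) :
    EqOn (deriv fun x => x * φ x) (fun _ => α) (Ioi 1) := by
  have h : EqOn (fun x => x * φ x) (fun x => x * α) (Ioi 1) := fun x hx => by
    simp [hφ1 x (le_of_lt hx)]
  simpa using h.deriv isOpen_Ioi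

theorem tendsto_ratio_id_mul (hφ : ContDiff ℝ 2 φ) (hφ0 : ∀ x ≤ (0 : ℝ), φ x = 0)
    (hφ1 : ∀ x ≥ (1 : ℝ), φ x = α) :
    Tendsto (fun q : ℝ × ℝ => (dV (fun x => x * φ x) q.1 q.2 + d2V (fun x => x * φ x) q.1 q.2)
        / dV (fun x => x * φ x) q.1 q.2 ^ 3) (𝓝 0 ×ˢ 𝓟 (Ici 1)) (𝓝 1) := by
  have hχ' : ContDiff ℝ 1 (deriv fun x => x * φ x) := (contDiff_id.mul hφ).deriv' (n := 1)
  have h0 : deriv (fun x => x * φ x) 0 = 0 := by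
    have h : HasDerivAt (fun x => x * φ x) (1 * φ 0 + 0 * deriv φ 0) 0 :=
      (hasDerivAt_id' 0).mul (hφ.differentiable (by norm_num) 0).hasDerivAt
    rw [h.deriv, hφ0 0 le_rfl]
    ring
  have hneg := eqOn_deriv_id_mul_Iio hφ0
  have hpos := eqOn_deriv_id_mul_Ioi hφ1
  obtain ⟨B₁, hB₁⟩ := hχ'.continuous.exists_abs_le_of_eqOn_Iio_Ioi hneg hpos
  obtain ⟨B₂, hB₂⟩ := (hχ'.continuous_deriv le_rfl).exists_abs_le_of_eqOn_Iio_Ioi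
    (by simpa using hneg.deriv isOpen_Iio) (by simpa using hpos.deriv isOpen_Ioi)
  exact tendsto_ratio hχ'.continuous.continuousAt h0 hB₁ hB₂

theorem deriv_ratio_eq_dV_d2V (hφ : ContDiff ℝ 2 φ) {ε s : ℝ} (hε : ε ≠ 0) (hs : 1 < s) :
    (2 * deriv (fun t => log t + φ (ε * log (log t)) * log (log t)) s
        + s * deriv (deriv (fun t => log t + φ (ε * log (log t)) * log (log t))) s)
      / (s ^ 2 * deriv (fun t => log t + φ (ε * log (log t)) * log (log t)) s ^ 3)
      = (dV (fun x => x * φ x) ε (log s) + d2V (fun x => x * φ x) ε (log s))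
        / dV (fun x => x * φ x) ε (log s) ^ 3 := by
  have hχ : ContDiff ℝ 2 fun x => x * φ x := contDiff_id.mul hφ
  have hv : (fun t => log t + φ (ε * log (log t)) * log (log t))
      = fun t => V (fun x => x * φ x) ε (log t) := by
    funext t
    simp only [V]
    field_simp
  have hV : ∀ᶠ τ in 𝓝 (log s), HasDerivAt (V (fun x => x * φ x) ε) (dV _ ε τ) τ :=
    (lt_mem_nhds (log_pos hs)).mono fun τ hτ =>
      hasDerivAt_V (hχ.differentiable (by norm_num)) hε hτ.ne'
  rw [hv, deriv_ratio_comp_log (one_pos.trans hs) hV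
    (hasDerivAt_dV hχ.differentiable_deriv_two (log_pos hs).ne')]

end IdMul

theorem stmt_7_general (α : ℝ) (φ : ℝ → ℝ)
    (hφC2 : ContDiff ℝ 2 φ)
    (hφ0 : ∀ x ≤ (0 : ℝ), φ x = 0) (hφ1 : ∀ x ≥ (1 : ℝ), φ x = α) :
    ∀ δ > (0 : ℝ), ∃ ε₀ > (0 : ℝ), ∀ ε : ℝ, 0 < ε → ε ≤ ε₀ →
      ∀ s : ℝ, Real.exp 1 ≤ s →
        |(2 * deriv (fun t => Real.log t + φ (ε * Real.log (Real.log t)) * Real.log (Real.log t)) s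
            + s * deriv (deriv (fun t => Real.log t + φ (ε * Real.log (Real.log t)) * Real.log (Real.log t))) s)
          / (s ^ 2 * deriv (fun t => Real.log t + φ (ε * Real.log (Real.log t)) * Real.log (Real.log t)) s ^ 3)
          - 1| < δ := by
  intro δ hδ
  have hnear := (tendsto_ratio_id_mul hφC2 hφ0 hφ1).eventually (Metric.ball_mem_nhds 1 hδ)
  obtain ⟨ε₀, hε₀, hclose⟩ := Metric.eventually_nhds_iff.mp (eventually_prod_principal_iff.mp hnear)
  refine ⟨ε₀ / 2, half_pos hε₀, fun ε hε hεle s hs => ?_⟩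
  have hs1 : 1 < s := (one_lt_exp_iff.mpr one_pos).trans_le hs
  rw [deriv_ratio_eq_dV_d2V hφC2 hε.ne' hs1]
  exact hclose (by rw [Real.dist_eq, sub_zero, abs_of_pos hε]; linarith) (log s)
    ((le_log_iff_exp_le (one_pos.trans hs1)).mpr hs)

/-- With `φ : ℝ → [0,α]` a C² nondecreasing function vanishing on `ℝ⁻` and equal
to `α` on `[1,∞)`, and `v_ε(s) = ln s + φ(ε ln ln s) ln ln s`, the quantity
`(2v_ε'(s) + s v_ε''(s))/(s² v_ε'(s)³)` converges to `1` as `ε → 0`,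
uniformly in `s ∈ [e, ∞)`. -/
theorem stmt_7 (α : ℝ) (hα : 0 ≤ α) (φ : ℝ → ℝ)
    (hφC2 : ContDiff ℝ 2 φ) (hφmono : Monotone φ)
    (hφrange : ∀ x, φ x ∈ Set.Icc 0 α)
    (hφ0 : ∀ x ≤ (0 : ℝ), φ x = 0) (hφ1 : ∀ x ≥ (1 : ℝ), φ x = α) :
    ∀ δ > (0 : ℝ), ∃ ε₀ > (0 : ℝ), ∀ ε : ℝ, 0 < ε → ε ≤ ε₀ →
      ∀ s : ℝ, Real.exp 1 ≤ s →
        |(2 * deriv (fun t => Real.log t + φ (ε * Real.log (Real.log t)) * Real.log (Real.log t)) s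
            + s * deriv (deriv (fun t => Real.log t + φ (ε * Real.log (Real.log t)) * Real.log (Real.log t))) s)
          / (s ^ 2 * deriv (fun t => Real.log t + φ (ε * Real.log (Real.log t)) * Real.log (Real.log t)) s ^ 3)
          - 1| < δ :=
  stmt_7_general α φ hφC2 hφ0 hφ1
end

section
/- For any α ≥ 0 and κ ∈ (0,1), there exist s_α ≥ 1 and a C² nondecreasing function u_α : ℝ₊* → ℝ with u_α(s) = ln s for 0 < s ≤ 1, u_α(s) = ln s + α ln ln s for s ≥ s_α, and -(2u_α'(s) + s u_α''(s))/(s² u_α'(s)³) ≤ -κ² for all s > 0. -/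
/-!
Write `u(s) = U(log s)` with `U(t) = t + α ψ(t) log t`, where `ψ(t) = smoothTransition (t / T - 1)`
switches from `0` to `1` on `[T, 2T]`. In the variable `t = log s` the curvature is
`-(U' + U'')/U'³`, so it suffices that `1 ≤ U' ≤ 1 + ε` and `U'' ≥ -ε` for some `ε` with
`κ²(1 + ε)² + ε ≤ 1`, which exists since `κ < 1`. The derivatives of `ψ` are `O(1/T)` and supported
in `[T, 2T]`, where `log t ≤ log 2T`; so those of `ψ · log` are `O(log T / T)`, and a large `T`
does it.
-/

open Real Set Filter Topology

namespace Real.smoothTransition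

lemma eventuallyEq_const_of_notMem_Icc {x : ℝ} (hx : x ∉ Icc (0 : ℝ) 1) :
    ∃ c, smoothTransition =ᶠ[𝓝 x] fun _ => c := by
  rcases not_and_or.1 hx with h | h
  · exact ⟨0, eventually_of_mem (Iio_mem_nhds (not_le.1 h)) fun y hy => zero_of_nonpos hy.le⟩
  · exact ⟨1, eventually_of_mem (Ioi_mem_nhds (not_le.1 h)) fun y hy => one_of_one_le hy.le⟩

lemma deriv_eq_zero_of_notMem_Icc {x : ℝ} (hx : x ∉ Icc (0 : ℝ) 1) :
    deriv smoothTransition x = 0 := by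
  obtain ⟨c, hc⟩ := eventuallyEq_const_of_notMem_Icc hx
  simp [hc.deriv_eq]

lemma deriv_deriv_eq_zero_of_notMem_Icc {x : ℝ} (hx : x ∉ Icc (0 : ℝ) 1) :
    deriv (deriv smoothTransition) x = 0 := by
  obtain ⟨c, hc⟩ := eventuallyEq_const_of_notMem_Icc hx
  simp [hc.deriv.deriv_eq]

lemma exists_bound_deriv :
    ∃ C, ∀ x, |deriv smoothTransition x| ≤ C ∧ |deriv (deriv smoothTransition) x| ≤ C := by
  have h2 : ContDiff ℝ 2 smoothTransition := smoothTransition.contDiff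
  obtain ⟨C₁, hC₁⟩ := (h2.continuous_deriv one_le_two).bounded_above_of_compact_support
    (HasCompactSupport.intro isCompact_Icc fun _ => deriv_eq_zero_of_notMem_Icc)
  obtain ⟨C₂, hC₂⟩ := h2.deriv'.continuous_deriv_one.bounded_above_of_compact_support
    (HasCompactSupport.intro isCompact_Icc fun _ => deriv_deriv_eq_zero_of_notMem_Icc)
  exact ⟨max C₁ C₂, fun x => ⟨(hC₁ x).trans (le_max_left _ _), (hC₂ x).trans (le_max_right _ _)⟩⟩

end Real.smoothTransition

noncomputable def cutoffLog (T t : ℝ) : ℝ := smoothTransition (t / T - 1) * log t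

section cutoffLog

variable {T t : ℝ}

lemma cutoffLog_eventuallyEq_zero (hT : 0 < T) (ht : t < T) : cutoffLog T =ᶠ[𝓝 t] 0 := by
  filter_upwards [Iio_mem_nhds ht] with y hy
  rw [cutoffLog, smoothTransition.zero_of_nonpos, zero_mul, Pi.zero_apply]
  rw [sub_nonpos, div_le_one hT]
  exact hy.le

lemma cutoffLog_of_two_mul_le (hT : 0 < T) (ht : 2 * T ≤ t) : cutoffLog T t = log t := by
  rw [cutoffLog, smoothTransition.one_of_one_le, one_mul]
  rw [le_sub_iff_add_le, le_div_iff₀ hT]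
  linarith

lemma contDiff_cutoffLog (hT : 0 < T) : ContDiff ℝ 2 (cutoffLog T) := by
  refine contDiff_iff_contDiffAt.2 fun t => ?_
  rcases lt_or_ge t T with ht | ht
  · exact contDiffAt_const.congr_of_eventuallyEq (cutoffLog_eventuallyEq_zero hT ht)
  · have hψ : ContDiff ℝ 2 fun t => smoothTransition (t / T - 1) :=
      smoothTransition.contDiff.comp (by fun_prop)
    exact hψ.contDiffAt.mul (contDiffAt_log.2 (by linarith))

lemma hasDerivAt_comp_div_sub_one {f : ℝ → ℝ} (hf : DifferentiableAt ℝ f (t / T - 1)) :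
    HasDerivAt (fun t => f (t / T - 1)) (deriv f (t / T - 1) / T) t :=
  (hf.hasDerivAt.comp t (((hasDerivAt_id t).div_const T).sub_const 1)).congr_deriv
    (by simp [div_eq_mul_inv])

lemma hasDerivAt_cutoffLog (ht : 0 < t) :
    HasDerivAt (cutoffLog T)
      (deriv smoothTransition (t / T - 1) / T * log t + smoothTransition (t / T - 1) / t) t :=
  ((hasDerivAt_comp_div_sub_one
    ((smoothTransition.contDiff (n := 1)).differentiable one_ne_zero _)).mul
      (hasDerivAt_log ht.ne')).congr_deriv (by ring)

lemma deriv_deriv_cutoffLog (ht : 0 < t) :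
    deriv (deriv (cutoffLog T)) t =
      deriv (deriv smoothTransition) (t / T - 1) / T ^ 2 * log t
        + 2 * (deriv smoothTransition (t / T - 1) / T) / t
        - smoothTransition (t / T - 1) / t ^ 2 := by
  have hχ : ContDiff ℝ 2 smoothTransition := smoothTransition.contDiff
  have hD : deriv (cutoffLog T) =ᶠ[𝓝 t] fun t =>
      deriv smoothTransition (t / T - 1) / T * log t + smoothTransition (t / T - 1) / t := by
    filter_upwards [Ioi_mem_nhds ht] with y hy using (hasDerivAt_cutoffLog hy).deriv
  have h1 := hasDerivAt_comp_div_sub_one (T := T) (t := t) (hχ.differentiable_deriv_two _)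
  have h0 := hasDerivAt_comp_div_sub_one (T := T) (t := t) (hχ.differentiable two_ne_zero _)
  rw [hD.deriv_eq]
  exact ((((h1.div_const T).mul (hasDerivAt_log ht.ne')).add
    (h0.mul (hasDerivAt_inv ht.ne'))).congr_deriv (by ring)).deriv


lemma deriv_cutoffLog_of_lt (hT : 0 < T) (ht : t < T) :
    deriv (cutoffLog T) t = 0 ∧ deriv (deriv (cutoffLog T)) t = 0 := by
  have h := cutoffLog_eventuallyEq_zero hT ht
  exact ⟨by simp [h.deriv_eq], by simp [h.deriv.deriv_eq]⟩

lemma abs_comp_mul_log_le {φ : ℝ → ℝ} {C : ℝ} (hC : ∀ x, |φ x| ≤ C) (hφ : ∀ x, 1 < x → φ x = 0)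
    (hT : 1 ≤ T) (ht : T ≤ t) : |φ (t / T - 1)| * log t ≤ C * log (2 * T) := by
  rcases le_or_gt t (2 * T) with h2 | h2
  · exact mul_le_mul (hC _) (log_le_log (by linarith) h2) (log_nonneg (by linarith))
      ((abs_nonneg _).trans (hC 0))
  · rw [hφ _ (by rw [lt_sub_iff_add_lt, lt_div_iff₀ (by linarith)]; linarith), abs_zero, zero_mul]
    exact mul_nonneg ((abs_nonneg _).trans (hC 0)) (log_nonneg (by linarith))

lemma deriv_cutoffLog_bounds {C : ℝ}
    (hC : ∀ x, |deriv smoothTransition x| ≤ C ∧ |deriv (deriv smoothTransition) x| ≤ C)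
    (hT : 1 ≤ T) (t : ℝ) :
    0 ≤ deriv (cutoffLog T) t ∧ deriv (cutoffLog T) t ≤ (C * log (2 * T) + 1) / T ∧
      -((C * log (2 * T) + 1) / T) ≤ deriv (deriv (cutoffLog T)) t := by
  have hT0 : 0 < T := by linarith
  set K := C * log (2 * T)
  have hK : 0 ≤ K := mul_nonneg ((abs_nonneg _).trans (hC 0).1) (log_nonneg (by linarith))
  rcases lt_or_ge t T with ht | ht
  · obtain ⟨h1, h2⟩ := deriv_cutoffLog_of_lt hT0 ht
    have hE : 0 ≤ (K + 1) / T := by positivity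
    rw [h1, h2]
    exact ⟨le_rfl, hE, by linarith⟩
  have ht0 : 0 < t := by linarith
  have hL : 0 ≤ log t := log_nonneg (by linarith)
  have hvanish : ∀ x : ℝ, 1 < x → x ∉ Icc (0 : ℝ) 1 := fun x hx h => (h.2.trans_lt hx).false
  have hAL := abs_comp_mul_log_le (fun x => (hC x).1)
    (fun x hx => smoothTransition.deriv_eq_zero_of_notMem_Icc (hvanish x hx)) hT ht
  have hA₂L := abs_comp_mul_log_le (fun x => (hC x).2)
    (fun x hx => smoothTransition.deriv_deriv_eq_zero_of_notMem_Icc (hvanish x hx)) hT ht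
  set x := t / T - 1
  have hA : 0 ≤ deriv smoothTransition x := smoothTransition.monotone.deriv_nonneg
  rw [abs_of_nonneg hA] at hAL
  replace hA₂L : -K ≤ deriv (deriv smoothTransition) x * log t := by
    nlinarith [neg_abs_le (deriv (deriv smoothTransition) x)]
  have hB : smoothTransition x / t ≤ 1 / T :=
    div_le_div₀ zero_le_one (smoothTransition.le_one _) hT0 ht
  have hB₂ : smoothTransition x / t ^ 2 ≤ 1 / T :=
    div_le_div₀ zero_le_one (smoothTransition.le_one _) hT0 (by nlinarith)
  rw [(hasDerivAt_cutoffLog ht0).deriv, deriv_deriv_cutoffLog ht0]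
  refine ⟨add_nonneg (mul_nonneg (div_nonneg hA hT0.le) hL)
    (div_nonneg (smoothTransition.nonneg _) ht0.le), ?_, ?_⟩
  · calc deriv smoothTransition x / T * log t + smoothTransition x / t
        = deriv smoothTransition x * log t / T + smoothTransition x / t := by ring
      _ ≤ K / T + 1 / T := by gcongr
      _ = (K + 1) / T := by ring
  · have h2 : -K / T ≤ deriv (deriv smoothTransition) x * log t / T ^ 2 := by
      rw [div_le_div_iff₀ hT0 (by positivity)]
      nlinarith [mul_le_mul_of_nonneg_right hA₂L hT0.le,
        mul_nonneg hK (by nlinarith : 0 ≤ T ^ 2 - T)]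
    have h3 : 0 ≤ 2 * (deriv smoothTransition x / T) / t := by positivity
    calc -((K + 1) / T) = -K / T - 1 / T := by ring
      _ ≤ deriv (deriv smoothTransition) x / T ^ 2 * log t
          + 2 * (deriv smoothTransition x / T) / t - smoothTransition x / t ^ 2 := by
        rw [div_mul_eq_mul_div _ (T ^ 2)]
        linarith

end cutoffLog

lemma tendsto_mul_log_two_mul_add_one_div_atTop (C : ℝ) :
    Tendsto (fun T => (C * log (2 * T) + 1) / T) atTop (𝓝 0) := by
  have hlog : Tendsto (fun T => log (2 * T) / (2 * T)) atTop (𝓝 0) :=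
    isLittleO_log_id_atTop.tendsto_div_nhds_zero.comp (tendsto_id.const_mul_atTop two_pos)
  have h := (hlog.const_mul (2 * C)).add tendsto_inv_atTop_zero
  rw [mul_zero, zero_add] at h
  refine h.congr' ((eventually_ne_atTop 0).mono fun T hT => ?_)
  field_simp

lemma neg_add_div_pow_three_le {κ ε g h : ℝ} (hκε : κ ^ 2 * (1 + ε) ^ 2 + ε ≤ 1)
    (hg : 1 ≤ g) (hgε : g ≤ 1 + ε) (hh : -ε ≤ h) : -(g + h) / g ^ 3 ≤ -κ ^ 2 := by
  have hg3 : 0 < g ^ 3 := by positivity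
  rw [neg_div, neg_le_neg_iff, le_div_iff₀ hg3]
  have hκg : κ ^ 2 * g ^ 2 ≤ κ ^ 2 * (1 + ε) ^ 2 := by gcongr
  nlinarith [mul_le_mul_of_nonneg_right hκg (by linarith : (0:ℝ) ≤ g)]

lemma hasDerivAt_comp_log {U : ℝ → ℝ} {s : ℝ} (hU : DifferentiableAt ℝ U (log s)) (hs : 0 < s) :
    HasDerivAt (fun s => U (log s)) (deriv U (log s) / s) s :=
  (hU.hasDerivAt.comp s (hasDerivAt_log hs.ne')).congr_deriv (by simp [div_eq_mul_inv])

lemma curvature_comp_log {U : ℝ → ℝ} (hU : ContDiff ℝ 2 U) {s : ℝ} (hs : 0 < s) :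
    -(2 * deriv (fun s => U (log s)) s + s * deriv (deriv (fun s => U (log s))) s)
        / (s ^ 2 * deriv (fun s => U (log s)) s ^ 3)
      = -(deriv U (log s) + deriv (deriv U) (log s)) / deriv U (log s) ^ 3 := by
  have hD : deriv (fun s => U (log s)) =ᶠ[𝓝 s] fun s => deriv U (log s) / s := by
    filter_upwards [Ioi_mem_nhds hs] with y hy
    exact (hasDerivAt_comp_log (hU.differentiable two_ne_zero _) hy).deriv
  have h2 : HasDerivAt (fun y => deriv U (log y) / y)
      ((deriv (deriv U) (log s) / s * s - deriv U (log s) * 1) / s ^ 2) s :=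
    (hasDerivAt_comp_log (hU.differentiable_deriv_two _) hs).div (hasDerivAt_id' s) hs.ne'
  rw [hD.deriv_eq, hD.self_of_nhds, h2.deriv]
  field_simp
  ring

noncomputable def logProfile (α T t : ℝ) : ℝ := t + α * cutoffLog T t

section logProfile

variable {α T t : ℝ}

lemma logProfile_of_lt (hT : 0 < T) (ht : t < T) : logProfile α T t = t := by
  rw [logProfile, (cutoffLog_eventuallyEq_zero hT ht).self_of_nhds, Pi.zero_apply, mul_zero,
    add_zero]

lemma logProfile_of_two_mul_le (hT : 0 < T) (ht : 2 * T ≤ t) :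
    logProfile α T t = t + α * log t := by
  rw [logProfile, cutoffLog_of_two_mul_le hT ht]

lemma contDiff_logProfile (hT : 0 < T) : ContDiff ℝ 2 (logProfile α T) :=
  contDiff_id.add (contDiff_const.mul (contDiff_cutoffLog hT))

lemma deriv_logProfile (hT : 0 < T) :
    deriv (logProfile α T) = fun t => 1 + α * deriv (cutoffLog T) t :=
  funext fun t => ((hasDerivAt_id' t).add
    (((contDiff_cutoffLog hT).differentiable two_ne_zero t).hasDerivAt.const_mul α)).deriv

lemma deriv_deriv_logProfile (hT : 0 < T) :
    deriv (deriv (logProfile α T)) t = α * deriv (deriv (cutoffLog T)) t := by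
  rw [deriv_logProfile hT]
  exact (((contDiff_cutoffLog hT).differentiable_deriv_two t).hasDerivAt.const_mul α
    |>.const_add 1).deriv

lemma deriv_logProfile_bounds (hα : 0 ≤ α) {C : ℝ}
    (hC : ∀ x, |deriv smoothTransition x| ≤ C ∧ |deriv (deriv smoothTransition) x| ≤ C)
    (hT : 1 ≤ T) (t : ℝ) :
    1 ≤ deriv (logProfile α T) t ∧
      deriv (logProfile α T) t ≤ 1 + α * ((C * log (2 * T) + 1) / T) ∧
      -(α * ((C * log (2 * T) + 1) / T)) ≤ deriv (deriv (logProfile α T)) t := by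
  have hT0 : 0 < T := by linarith
  obtain ⟨h0, h1, h2⟩ := deriv_cutoffLog_bounds hC hT t
  rw [deriv_deriv_logProfile hT0, deriv_logProfile hT0]
  exact ⟨le_add_of_nonneg_right (mul_nonneg hα h0),
    add_le_add_right (mul_le_mul_of_nonneg_left h1 hα) 1,
    (neg_mul_eq_mul_neg α _).symm ▸ mul_le_mul_of_nonneg_left h2 hα⟩

end logProfile

/-- For any `α ≥ 0` and `κ ∈ (0,1)` there exist `s_α ≥ 1` and a C² nondecreasing
function `u_α` on `(0,∞)` with `u_α(s) = ln s` for `0 < s ≤ 1`,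
`u_α(s) = ln s + α ln ln s` for `s ≥ s_α`, and curvature
`-(2u_α'(s)+su_α''(s))/(s²u_α'(s)³) ≤ -κ²` for all `s > 0`. -/
theorem stmt_8 (α κ : ℝ) (hα : 0 ≤ α) (hκ : κ ∈ Set.Ioo (0 : ℝ) 1) :
    ∃ sα : ℝ, 1 ≤ sα ∧ ∃ u : ℝ → ℝ,
      ContDiffOn ℝ 2 u (Set.Ioi 0) ∧ MonotoneOn u (Set.Ioi 0) ∧
      (∀ s : ℝ, 0 < s → s ≤ 1 → u s = Real.log s) ∧
      (∀ s : ℝ, sα ≤ s → u s = Real.log s + α * Real.log (Real.log s)) ∧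
      (∀ s : ℝ, 0 < s →
        -(2 * deriv u s + s * deriv (deriv u) s) / (s ^ 2 * deriv u s ^ 3) ≤ -κ ^ 2) := by
  obtain ⟨hκ0, hκ1⟩ := hκ
  obtain ⟨C, hC⟩ := smoothTransition.exists_bound_deriv
  have hκ2 : 0 < 1 - κ ^ 2 := by nlinarith
  have hκε : κ ^ 2 * (1 + (1 - κ ^ 2) / 8) ^ 2 + (1 - κ ^ 2) / 8 ≤ 1 := by
    have hκ2' : 0 < κ ^ 2 * (1 - κ ^ 2) := by positivity
    nlinarith [mul_pos hκ2' hκ2]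
  obtain ⟨T, hTε, hT⟩ := ((((tendsto_mul_log_two_mul_add_one_div_atTop C).const_mul α).eventually
    (ge_mem_nhds (by linarith : α * 0 < (1 - κ ^ 2) / 8))).and (eventually_ge_atTop 1)).exists
  have hT0 : 0 < T := by linarith
  have hU : ContDiff ℝ 2 (logProfile α T) := contDiff_logProfile hT0
  have hbounds := deriv_logProfile_bounds hα hC hT
  refine ⟨exp (2 * T), one_le_exp (by linarith), fun s => logProfile α T (log s),
    hU.comp_contDiffOn (contDiffOn_log.mono fun s hs => ne_of_gt hs),
    (monotone_of_deriv_nonneg (hU.differentiable two_ne_zero) fun t => by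
      linarith [(hbounds t).1]).comp_monotoneOn strictMonoOn_log.monotoneOn, ?_, ?_, ?_⟩
  · intro s hs hs1
    exact logProfile_of_lt hT0 ((log_nonpos hs.le hs1).trans_lt hT0)
  · intro s hs
    exact logProfile_of_two_mul_le hT0 ((le_log_iff_exp_le ((exp_pos _).trans_le hs)).2 hs)
  · intro s hs
    obtain ⟨h1, h2, h3⟩ := hbounds (log s)
    rw [curvature_comp_log hU hs]
    exact neg_add_div_pow_three_le hκε h1 (by linarith) (by linarith)
end
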